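/- Let f : E → F be an exact functor between exact categories and let T be an exact substructure of the exact structure T₀ on F. Then the class S_f of short exact sequences η in E such that f(η) belongs to T is an exact structure on E. In particular, f induces an order-preserving map from the poset of exact substructures of F to the poset of exact substructures of E. -/

import Mathlib

/-!
Whether `S` lies in `S_{f,T}` is tested on its image `f S`, which always lies in `T₀` and is
therefore a kernel–cokernel pair. Each axiom for `S_{f,T}` is obtained by performing the
construction in `E` (giving a sequence whose image lies in `T₀`) and in `T`, and comparing
the two resulting sequences of `F`. For composites of inflations or deflations they share a
map, and a kernel–cokernel pair is determined up to isomorphism by either of its maps. For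
pushouts and pullbacks there is a morphism between them that is invertible on the outer terms,
hence an isomorphism by the short five lemma, which holds in any exact category. Split sequences
are sent to split sequences even though `f` need not be additive, because `f` preserves the
retraction `biprod.fst` of `biprod.inl`.
-/

open CategoryTheory CategoryTheory.Limits

universe v u v' u'

/-- A Quillen exact structure on an additive category `C`. -/
structure ExactStructure (C : Type u) [Category.{v} C] [Preadditive C]
    [HasBinaryBiproducts C] where
  sequences : Set (ShortComplex C)
  isKernel : ∀ S ∈ sequences, Nonempty (IsLimit (KernelFork.ofι S.f S.zero))
  isCokernel : ∀ S ∈ sequences, Nonempty (IsColimit (CokernelCofork.ofπ S.g S.zero))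
  iso_closed : ∀ S ∈ sequences, ∀ S' : ShortComplex C, (S ≅ S') → S' ∈ sequences
  split_mem : ∀ X Y : C,
    ShortComplex.mk (biprod.inl : X ⟶ X ⊞ Y) (biprod.snd : X ⊞ Y ⟶ Y) (by simp) ∈ sequences
  infl_comp : ∀ {X Y Z : C} (f : X ⟶ Y) (g : Y ⟶ Z),
    (∃ (W : C) (q : Y ⟶ W) (w : f ≫ q = 0), ShortComplex.mk f q w ∈ sequences) →
    (∃ (W : C) (q : Z ⟶ W) (w : g ≫ q = 0), ShortComplex.mk g q w ∈ sequences) →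
    (∃ (W : C) (q : Z ⟶ W) (w : (f ≫ g) ≫ q = 0), ShortComplex.mk (f ≫ g) q w ∈ sequences)
  defl_comp : ∀ {X Y Z : C} (f : X ⟶ Y) (g : Y ⟶ Z),
    (∃ (W : C) (i : W ⟶ X) (w : i ≫ f = 0), ShortComplex.mk i f w ∈ sequences) →
    (∃ (W : C) (i : W ⟶ Y) (w : i ≫ g = 0), ShortComplex.mk i g w ∈ sequences) →
    (∃ (W : C) (i : W ⟶ X) (w : i ≫ (f ≫ g) = 0), ShortComplex.mk i (f ≫ g) w ∈ sequences)
  pushout_ex : ∀ S ∈ sequences, ∀ (A : C) (a : S.X₁ ⟶ A),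
    ∃ S' ∈ sequences, ∃ (φ : S ⟶ S') (e : A ≅ S'.X₁),
      φ.τ₁ = a ≫ e.hom ∧ IsIso φ.τ₃ ∧ IsPushout S.f φ.τ₁ φ.τ₂ S'.f
  pullback_ex : ∀ S ∈ sequences, ∀ (A : C) (c : A ⟶ S.X₃),
    ∃ S' ∈ sequences, ∃ (φ : S' ⟶ S) (e : S'.X₃ ≅ A),
      φ.τ₃ = e.hom ≫ c ∧ IsIso φ.τ₁ ∧ IsPullback S'.g φ.τ₂ φ.τ₃ S.g

variable {E : Type u} [Category.{v} E] [Preadditive E] [HasBinaryBiproducts E]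
variable {F : Type u'} [Category.{v'} F] [Preadditive F] [HasBinaryBiproducts F]

def ExactOn (EE : ExactStructure E) (T₀ : ExactStructure F) (f : E ⥤ F) : Prop :=
  ∀ S ∈ EE.sequences, ∃ w : f.map S.f ≫ f.map S.g = 0,
    ShortComplex.mk (f.map S.f) (f.map S.g) w ∈ T₀.sequences

/-- The class `S_{f,T}` of admissible short exact sequences `η` of `E` such that `f(η)`
lies in the class `T`. -/
def Sf (EE : ExactStructure E) (f : E ⥤ F) (T : Set (ShortComplex F)) :
    Set (ShortComplex E) :=
  {S | S ∈ EE.sequences ∧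
    ∃ w : f.map S.f ≫ f.map S.g = 0, ShortComplex.mk (f.map S.f) (f.map S.g) w ∈ T}

namespace CategoryTheory.ShortComplex

variable {C : Type*} [Category C] [Preadditive C]

noncomputable def splittingOfIsColimitOfRetraction {S : ShortComplex C}
    (hS : IsColimit (CokernelCofork.ofπ S.g S.zero)) (r : S.X₂ ⟶ S.X₁)
    (f_r : S.f ≫ r = 𝟙 S.X₁) : S.Splitting :=
  have : Epi S.g := epi_of_isColimit_cofork hS
  let s := CokernelCofork.IsColimit.desc' hS (𝟙 S.X₂ - r ≫ S.f) (by simp [reassoc_of% f_r])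
  have hs : S.g ≫ s.1 = 𝟙 S.X₂ - r ≫ S.f := s.2
  { r, f_r
    s := s.1
    s_g := by
      rw [← cancel_epi S.g, reassoc_of% hs]
      simp
    id := by
      rw [hs]
      abel }

lemma mono_τ₂_of_isLimit {S₁ S₂ : ShortComplex C} (φ : S₁ ⟶ S₂)
    (h₁ : IsLimit (KernelFork.ofι S₁.f S₁.zero)) [Mono S₂.f] [Mono φ.τ₁] [Mono φ.τ₃] :
    Mono φ.τ₂ := by
  refine Preadditive.mono_of_cancel_zero _ fun a ha => ?_
  have ha₃ : a ≫ S₁.g = 0 := by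
    rw [← cancel_mono φ.τ₃, Category.assoc, ← φ.comm₂₃, reassoc_of% ha, zero_comp, zero_comp]
  obtain ⟨b, hb⟩ := KernelFork.IsLimit.lift' h₁ a ha₃
  replace hb : b ≫ S₁.f = a := hb
  have hb₀ : b = 0 := by
    rw [← cancel_mono (φ.τ₁ ≫ S₂.f), φ.comm₁₂, ← Category.assoc, hb, ha, zero_comp]
  rw [← hb, hb₀, zero_comp]

end CategoryTheory.ShortComplex

namespace ExactStructure

variable {C : Type*} [Category C] [Preadditive C] [HasBinaryBiproducts C] (T : ExactStructure C)

lemma mem_of_splitting {S : ShortComplex C} (s : S.Splitting) : S ∈ T.sequences :=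
  T.iso_closed _ (T.split_mem S.X₁ S.X₃) S
    (ShortComplex.isoMk (Iso.refl _) s.isoBinaryBiproduct.symm (Iso.refl _) (by simp)
      (by ext <;> simp))

lemma mem_of_isColimit_of_f_eq {X Y Z Z' : C} {u u' : X ⟶ Y} {q : Y ⟶ Z} {w : u ≫ q = 0}
    (hS : ShortComplex.mk u q w ∈ T.sequences) {q' : Y ⟶ Z'} {w' : u' ≫ q' = 0} (hu : u' = u)
    (hc : IsColimit (CokernelCofork.ofπ q' w')) : ShortComplex.mk u' q' w' ∈ T.sequences := by
  subst hu
  have h := (T.isCokernel _ hS).some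
  refine T.iso_closed _ hS _ (ShortComplex.isoMk (Iso.refl _) (Iso.refl _)
    (h.coconePointUniqueUpToIso hc) (by simp) ?_)
  simpa using (h.comp_coconePointUniqueUpToIso_hom hc WalkingParallelPair.one).symm

lemma mem_of_isLimit_of_g_eq {X X' Y Z : C} {p p' : Y ⟶ Z} {i : X ⟶ Y} {w : i ≫ p = 0}
    (hS : ShortComplex.mk i p w ∈ T.sequences) {i' : X' ⟶ Y} {w' : i' ≫ p' = 0} (hp : p' = p)
    (hk : IsLimit (KernelFork.ofι i' w')) : ShortComplex.mk i' p' w' ∈ T.sequences := by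
  subst hp
  have h := (T.isKernel _ hS).some
  refine T.iso_closed _ hS _ (ShortComplex.isoMk (h.conePointUniqueUpToIso hk) (Iso.refl _)
    (Iso.refl _) ?_ (by simp))
  simpa using h.conePointUniqueUpToIso_hom_comp hk WalkingParallelPair.zero

lemma isSplitEpi_τ₂ {S₁ S₂ : ShortComplex C} (h₁ : S₁ ∈ T.sequences)
    (h₂ : IsLimit (KernelFork.ofι S₂.f S₂.zero)) (φ : S₁ ⟶ S₂) [IsIso φ.τ₁] [IsIso φ.τ₃] :
    IsSplitEpi φ.τ₂ := by
  -- Pull `S₁` back to `P` over `S₂.X₂`. Comparing the two maps `P.X₂ ⟶ S₂.X₂` gives, via the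
  -- kernel `S₂.f`, a retraction of `P.f`; so `P` splits and its section yields one of `φ.τ₂`.
  obtain ⟨P, hP, χ, e, hχ₃, hχ₁, -⟩ := T.pullback_ex S₁ h₁ S₂.X₂ (S₂.g ≫ inv φ.τ₃)
  obtain ⟨ρ, hρ⟩ := KernelFork.IsLimit.lift' h₂ (P.g ≫ e.hom - χ.τ₂ ≫ φ.τ₂) (by
    rw [Preadditive.sub_comp, Category.assoc, Category.assoc, φ.comm₂₃, χ.comm₂₃_assoc, hχ₃]
    simp)
  replace hρ : ρ ≫ S₂.f = P.g ≫ e.hom - χ.τ₂ ≫ φ.τ₂ := hρ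
  have hfρ : P.f ≫ ρ = -(χ.τ₁ ≫ φ.τ₁) := by
    have : Mono S₂.f := mono_of_isLimit_fork h₂
    rw [← cancel_mono S₂.f, Category.assoc, hρ]
    simp [Preadditive.comp_sub, ← χ.comm₁₂_assoc, φ.comm₁₂]
  let sp := ShortComplex.splittingOfIsColimitOfRetraction (T.isCokernel P hP).some
    (-(ρ ≫ inv (χ.τ₁ ≫ φ.τ₁))) (by simp [reassoc_of% hfρ])
  have hsρ : sp.s ≫ ρ = 0 := by
    rw [← cancel_mono (inv (χ.τ₁ ≫ φ.τ₁)), zero_comp, Category.assoc, ← neg_eq_zero,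
      ← Preadditive.comp_neg]
    exact sp.s_r
  refine ⟨⟨e.inv ≫ sp.s ≫ χ.τ₂, ?_⟩⟩
  have hχφ : χ.τ₂ ≫ φ.τ₂ = P.g ≫ e.hom - ρ ≫ S₂.f := by rw [hρ]; abel
  simp [hχφ, Preadditive.comp_sub, reassoc_of% hsρ]

lemma isIso_of_isIso_τ₁_τ₃ {S₁ S₂ : ShortComplex C} (h₁ : S₁ ∈ T.sequences)
    (h₂ : IsLimit (KernelFork.ofι S₂.f S₂.zero)) (φ : S₁ ⟶ S₂) [IsIso φ.τ₁] [IsIso φ.τ₃] :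
    IsIso φ := by
  have : Mono S₂.f := mono_of_isLimit_fork h₂
  have := ShortComplex.mono_τ₂_of_isLimit φ (T.isKernel S₁ h₁).some
  have := T.isSplitEpi_τ₂ h₁ h₂ φ
  have := isIso_of_mono_of_isSplitEpi φ.τ₂
  exact ShortComplex.isIso_of_isIso φ

lemma mem_of_hom_of_isIso_τ₃ {S D : ShortComplex C} (hS : S ∈ T.sequences)
    (hD : IsLimit (KernelFork.ofι D.f D.zero)) (φ : S ⟶ D) [IsIso φ.τ₃] : D ∈ T.sequences := by
  obtain ⟨S', hS', ψ, e, hψ₁, hψ₃, hpo⟩ := T.pushout_ex S hS D.X₁ φ.τ₁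
  have hdesc : S.f ≫ φ.τ₂ = ψ.τ₁ ≫ e.inv ≫ D.f := by simp [hψ₁, φ.comm₁₂]
  let χ : S' ⟶ D :=
    { τ₁ := e.inv
      τ₂ := hpo.desc φ.τ₂ (e.inv ≫ D.f) hdesc
      τ₃ := inv ψ.τ₃ ≫ φ.τ₃
      comm₁₂ := (hpo.inr_desc _ _ hdesc).symm
      comm₂₃ := hpo.hom_ext (by simp [← φ.comm₂₃, ψ.comm₂₃_assoc]) (by simp) }
  have := T.isIso_of_isIso_τ₁_τ₃ hS' hD χ
  exact T.iso_closed S' hS' D (asIso χ)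

lemma mem_of_hom_of_isIso_τ₁ (U : ExactStructure C) {D S : ShortComplex C}
    (hD : D ∈ U.sequences) (hS : S ∈ T.sequences) (φ : D ⟶ S) [IsIso φ.τ₁] :
    D ∈ T.sequences := by
  obtain ⟨S', hS', ψ, e, hψ₃, hψ₁, hpb⟩ := T.pullback_ex S hS D.X₃ φ.τ₃
  have hlift : (D.g ≫ e.inv) ≫ ψ.τ₃ = φ.τ₂ ≫ S.g := by simp [hψ₃, φ.comm₂₃]
  let χ : D ⟶ S' :=
    { τ₁ := φ.τ₁ ≫ inv ψ.τ₁
      τ₂ := hpb.lift (D.g ≫ e.inv) φ.τ₂ hlift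
      τ₃ := e.inv
      comm₁₂ := hpb.hom_ext (by simp) (by simp [← ψ.comm₁₂, φ.comm₁₂])
      comm₂₃ := hpb.lift_fst _ _ hlift }
  have := U.isIso_of_isIso_τ₁_τ₃ hD (T.isKernel S' hS').some χ
  exact T.iso_closed S' hS' D (asIso χ).symm

end ExactStructure

namespace CategoryTheory.Functor

variable (f : E ⥤ F)

def mapShortComplexHom {S S' : ShortComplex E} (φ : S ⟶ S')
    (w : f.map S.f ≫ f.map S.g = 0) (w' : f.map S'.f ≫ f.map S'.g = 0) :
    ShortComplex.mk (f.map S.f) (f.map S.g) w ⟶ ShortComplex.mk (f.map S'.f) (f.map S'.g) w' where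
  τ₁ := f.map φ.τ₁
  τ₂ := f.map φ.τ₂
  τ₃ := f.map φ.τ₃
  comm₁₂ := by simp only [← f.map_comp, φ.comm₁₂]
  comm₂₃ := by simp only [← f.map_comp, φ.comm₂₃]

instance {S S' : ShortComplex E} (φ : S ⟶ S') [IsIso φ.τ₁] (w w') :
    IsIso (f.mapShortComplexHom φ w w').τ₁ :=
  inferInstanceAs (IsIso (f.map φ.τ₁))

instance {S S' : ShortComplex E} (φ : S ⟶ S') [IsIso φ.τ₃] (w w') :
    IsIso (f.mapShortComplexHom φ w w').τ₃ :=
  inferInstanceAs (IsIso (f.map φ.τ₃))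

def mapShortComplexIso {S S' : ShortComplex E} (i : S ≅ S')
    (w : f.map S.f ≫ f.map S.g = 0) (w' : f.map S'.f ≫ f.map S'.g = 0) :
    ShortComplex.mk (f.map S.f) (f.map S.g) w ≅ ShortComplex.mk (f.map S'.f) (f.map S'.g) w' :=
  ShortComplex.isoMk (f.mapIso (ShortComplex.π₁.mapIso i)) (f.mapIso (ShortComplex.π₂.mapIso i))
    (f.mapIso (ShortComplex.π₃.mapIso i)) (f.mapShortComplexHom i.hom w w').comm₁₂
    (f.mapShortComplexHom i.hom w w').comm₂₃

end CategoryTheory.Functor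

def IsInflation {C : Type*} [Category C] [HasZeroMorphisms C] (T : Set (ShortComplex C))
    {X Y : C} (a : X ⟶ Y) : Prop :=
  ∃ (W : C) (q : Y ⟶ W) (w : a ≫ q = 0), ShortComplex.mk a q w ∈ T

def IsDeflation {C : Type*} [Category C] [HasZeroMorphisms C] (T : Set (ShortComplex C))
    {Y Z : C} (b : Y ⟶ Z) : Prop :=
  ∃ (W : C) (i : W ⟶ Y) (w : i ≫ b = 0), ShortComplex.mk i b w ∈ T

namespace Sf

variable {EE : ExactStructure E} {T₀ T : ExactStructure F} {f : E ⥤ F}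

lemma iso_closed (hf : ExactOn EE T₀ f) {S S' : ShortComplex E} (hS : S ∈ Sf EE f T.sequences)
    (i : S ≅ S') : S' ∈ Sf EE f T.sequences := by
  obtain ⟨hSE, w, hST⟩ := hS
  have hS'E := EE.iso_closed S hSE S' i
  obtain ⟨w', -⟩ := hf S' hS'E
  exact ⟨hS'E, w', T.iso_closed _ hST _ (f.mapShortComplexIso i w w')⟩

lemma split_mem (hf : ExactOn EE T₀ f) (X Y : E) :
    ShortComplex.mk (biprod.inl : X ⟶ X ⊞ Y) (biprod.snd : X ⊞ Y ⟶ Y) (by simp) ∈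
      Sf EE f T.sequences := by
  obtain ⟨w, hT₀⟩ := hf _ (EE.split_mem X Y)
  refine ⟨EE.split_mem X Y, w, T.mem_of_splitting ?_⟩
  refine ShortComplex.splittingOfIsColimitOfRetraction (T₀.isCokernel _ hT₀).some
    (f.map biprod.fst) ?_
  simp [← f.map_comp]

lemma infl_comp (hf : ExactOn EE T₀ f) {X Y Z : E} {a : X ⟶ Y} {b : Y ⟶ Z}
    (ha : IsInflation (Sf EE f T.sequences) a) (hb : IsInflation (Sf EE f T.sequences) b) :
    IsInflation (Sf EE f T.sequences) (a ≫ b) := by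
  obtain ⟨W₁, q₁, w₁, haE, wa, haT⟩ := ha
  obtain ⟨W₂, q₂, w₂, hbE, wb, hbT⟩ := hb
  obtain ⟨W, q, w, habE⟩ := EE.infl_comp a b ⟨W₁, q₁, w₁, haE⟩ ⟨W₂, q₂, w₂, hbE⟩
  obtain ⟨wf, habT₀⟩ := hf _ habE
  obtain ⟨_, _, _, habT⟩ := T.infl_comp _ _ ⟨_, _, wa, haT⟩ ⟨_, _, wb, hbT⟩
  exact ⟨W, q, w, habE, wf,
    T.mem_of_isColimit_of_f_eq habT (f.map_comp a b) (T₀.isCokernel _ habT₀).some⟩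

lemma defl_comp (hf : ExactOn EE T₀ f) {X Y Z : E} {a : X ⟶ Y} {b : Y ⟶ Z}
    (ha : IsDeflation (Sf EE f T.sequences) a) (hb : IsDeflation (Sf EE f T.sequences) b) :
    IsDeflation (Sf EE f T.sequences) (a ≫ b) := by
  obtain ⟨W₁, i₁, w₁, haE, wa, haT⟩ := ha
  obtain ⟨W₂, i₂, w₂, hbE, wb, hbT⟩ := hb
  obtain ⟨W, i, w, habE⟩ := EE.defl_comp a b ⟨W₁, i₁, w₁, haE⟩ ⟨W₂, i₂, w₂, hbE⟩
  obtain ⟨wf, habT₀⟩ := hf _ habE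
  obtain ⟨_, _, _, habT⟩ := T.defl_comp _ _ ⟨_, _, wa, haT⟩ ⟨_, _, wb, hbT⟩
  exact ⟨W, i, w, habE, wf,
    T.mem_of_isLimit_of_g_eq habT (f.map_comp a b) (T₀.isKernel _ habT₀).some⟩

lemma pushout_ex (hf : ExactOn EE T₀ f) {S : ShortComplex E} (hS : S ∈ Sf EE f T.sequences)
    (A : E) (a : S.X₁ ⟶ A) :
    ∃ S' ∈ Sf EE f T.sequences, ∃ (φ : S ⟶ S') (e : A ≅ S'.X₁),
      φ.τ₁ = a ≫ e.hom ∧ IsIso φ.τ₃ ∧ IsPushout S.f φ.τ₁ φ.τ₂ S'.f := by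
  obtain ⟨hSE, w, hST⟩ := hS
  obtain ⟨S', hS'E, φ, e, hφ₁, hφ₃, hpo⟩ := EE.pushout_ex S hSE A a
  obtain ⟨w', hS'T₀⟩ := hf S' hS'E
  have hS'T := T.mem_of_hom_of_isIso_τ₃ hST (T₀.isKernel _ hS'T₀).some
    (f.mapShortComplexHom φ w w')
  exact ⟨S', ⟨hS'E, w', hS'T⟩, φ, e, hφ₁, hφ₃, hpo⟩

lemma pullback_ex (hf : ExactOn EE T₀ f) {S : ShortComplex E} (hS : S ∈ Sf EE f T.sequences)
    (A : E) (c : A ⟶ S.X₃) :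
    ∃ S' ∈ Sf EE f T.sequences, ∃ (φ : S' ⟶ S) (e : S'.X₃ ≅ A),
      φ.τ₃ = e.hom ≫ c ∧ IsIso φ.τ₁ ∧ IsPullback S'.g φ.τ₂ φ.τ₃ S.g := by
  obtain ⟨hSE, w, hST⟩ := hS
  obtain ⟨S', hS'E, φ, e, hφ₃, hφ₁, hpb⟩ := EE.pullback_ex S hSE A c
  obtain ⟨w', hS'T₀⟩ := hf S' hS'E
  have hS'T := T.mem_of_hom_of_isIso_τ₁ T₀ hS'T₀ hST (f.mapShortComplexHom φ w' w)
  exact ⟨S', ⟨hS'E, w', hS'T⟩, φ, e, hφ₃, hφ₁, hpb⟩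

end Sf

def ExactStructure.comap (EE : ExactStructure E) (T₀ : ExactStructure F) (f : E ⥤ F)
    (hf : ExactOn EE T₀ f) (T : ExactStructure F) : ExactStructure E where
  sequences := Sf EE f T.sequences
  isKernel S hS := EE.isKernel S hS.1
  isCokernel S hS := EE.isCokernel S hS.1
  iso_closed _ hS _ i := Sf.iso_closed hf hS i
  split_mem := Sf.split_mem hf
  infl_comp _ _ := Sf.infl_comp hf
  defl_comp _ _ := Sf.defl_comp hf
  pushout_ex _ hS := Sf.pushout_ex hf hS
  pullback_ex _ hS := Sf.pullback_ex hf hS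

/-- Let `f : E → F` be an exact functor between exact categories and `T` an exact
substructure of the exact structure `T₀` on `F`.  Then `S_f = S_{f,T}` is an exact
structure on `E`; in particular `f` induces an order-preserving map from the poset of
exact substructures of `F` to the poset of exact substructures of `E`. -/
theorem Sf_exactStructure_of_exact_functor
    (EE : ExactStructure E) (T₀ : ExactStructure F) (f : E ⥤ F)
    (hf : ExactOn EE T₀ f) :
    (∀ T : ExactStructure F, T.sequences ⊆ T₀.sequences →
      ∃ ES : ExactStructure E, ES.sequences = Sf EE f T.sequences) ∧
    (∀ T T' : ExactStructure F, T.sequences ⊆ T₀.sequences →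
      T'.sequences ⊆ T₀.sequences → T.sequences ⊆ T'.sequences →
      Sf EE f T.sequences ⊆ Sf EE f T'.sequences) :=
  ⟨fun T _ => ⟨EE.comap T₀ f hf T, rfl⟩, fun _ _ _ _ h _ ⟨hS, w, hST⟩ => ⟨hS, w, h hST⟩⟩
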